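/- arXiv:0807.2994 — 7 statements merged into one kernel-verified Lean document; each statement's English description precedes it below -/
import Mathlib

section
/- Let F be a finite field, d ≥ 1, and let A : (Fin d)³ → F be a 3-cube that is nonsingular, i.e., for all nonzero vectors x, y ∈ F^d the vector whose k-th coordinate is Σ_{i,j} A(i,j,k)·xᵢ·yⱼ is nonzero. Then for every permutation σ of the three index positions, the permuted 3-cube A^σ defined by A^σ(i₁,i₂,i₃) = A(i_{σ(1)}, i_{σ(2)}, i_{σ(3)}) is also nonsingular. -/
/-!
For `x : Fin d → F` let `M x` be the matrix `(j, k) ↦ ∑ i, A ![i, j, k] * x i`. The cube is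
nonsingular exactly when `M x` has nonzero determinant for every `x ≠ 0`. Exchanging the last two
index positions transposes each `M x`, which leaves the determinant unchanged; exchanging the first
two positions merely exchanges the roles of `x` and `y`. These two transpositions generate the
symmetric group on the three positions.
-/

/-- A 3-cube of size `d` over `F` (indexed as a function on triples `Fin 3 → Fin d`)
is nonsingular if for all nonzero vectors `x, y` the vector
`k ↦ ∑ i j, A (i,j,k) * x i * y j` is nonzero. -/
def CubeNonsingular {F : Type*} [Field F] {d : ℕ} (A : (Fin 3 → Fin d) → F) : Prop :=
  ∀ x y : Fin d → F, x ≠ 0 → y ≠ 0 →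
    (fun k => ∑ i, ∑ j, A ![i, j, k] * x i * y j) ≠ 0

open Matrix

section

variable {F : Type*} [Field F] {d : ℕ}

def cubeSlice (A : (Fin 3 → Fin d) → F) (x : Fin d → F) : Matrix (Fin d) (Fin d) F :=
  of fun j k => ∑ i, A ![i, j, k] * x i

theorem vecMul_cubeSlice (A : (Fin 3 → Fin d) → F) (x y : Fin d → F) :
    y ᵥ* cubeSlice A x = fun k => ∑ i, ∑ j, A ![i, j, k] * x i * y j := by
  funext k
  simp only [vecMul, dotProduct, cubeSlice, of_apply, Finset.mul_sum]
  rw [Finset.sum_comm]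
  simp only [mul_comm, mul_left_comm]

theorem cubeNonsingular_iff_det_cubeSlice_ne_zero (A : (Fin 3 → Fin d) → F) :
    CubeNonsingular A ↔ ∀ x, x ≠ 0 → (cubeSlice A x).det ≠ 0 := by
  simp only [CubeNonsingular, ← vecMul_cubeSlice, Ne, ← exists_vecMul_eq_zero_iff]
  exact ⟨fun h x hx ⟨y, hy, hxy⟩ => h x y hx hy hxy, fun h x y hx hy hxy => h x hx ⟨y, hy, hxy⟩⟩

theorem vecCons_comp_swap_zero_one {α : Type*} (i j k : α) :
    ![i, j, k] ∘ Equiv.swap 0 1 = ![j, i, k] := by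
  funext m
  fin_cases m <;> rfl

theorem vecCons_comp_swap_one_two {α : Type*} (i j k : α) :
    ![i, j, k] ∘ Equiv.swap 1 2 = ![i, k, j] := by
  funext m
  fin_cases m <;> rfl

theorem cubeSlice_comp_swap_one_two (A : (Fin 3 → Fin d) → F) (x : Fin d → F) :
    cubeSlice (fun v => A (v ∘ Equiv.swap 1 2)) x = (cubeSlice A x)ᵀ := by
  ext j k
  simp only [cubeSlice, vecCons_comp_swap_one_two, of_apply, transpose_apply]

theorem CubeNonsingular.comp_swap_zero_one {A : (Fin 3 → Fin d) → F} (hA : CubeNonsingular A) :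
    CubeNonsingular (fun v => A (v ∘ Equiv.swap 0 1)) := by
  intro x y hx hy h
  refine hA y x hy hx ?_
  simp only [vecCons_comp_swap_zero_one] at h
  rw [← h]
  funext k
  rw [Finset.sum_comm]
  simp only [mul_right_comm]

theorem CubeNonsingular.comp_swap_one_two {A : (Fin 3 → Fin d) → F} (hA : CubeNonsingular A) :
    CubeNonsingular (fun v => A (v ∘ Equiv.swap 1 2)) := by
  rw [cubeNonsingular_iff_det_cubeSlice_ne_zero] at hA ⊢
  intro x hx
  rw [cubeSlice_comp_swap_one_two, det_transpose]
  exact hA x hx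

end

theorem cubeNonsingular_perm_general {F : Type*} [Field F] {d : ℕ}
    (A : (Fin 3 → Fin d) → F) (hA : CubeNonsingular A) (σ : Equiv.Perm (Fin 3)) :
    CubeNonsingular (fun v => A (v ∘ σ)) := by
  have hσ : σ ∈ Submonoid.closure (Set.range fun i : Fin 2 ↦ Equiv.swap i.castSucc i.succ) := by
    rw [Equiv.Perm.mclosure_swap_castSucc_succ]
    exact Submonoid.mem_top σ
  induction hσ using Submonoid.closure_induction generalizing A with
  | mem τ hτ =>
    obtain ⟨i, rfl⟩ := hτ
    fin_cases i
    · exact hA.comp_swap_zero_one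
    · exact hA.comp_swap_one_two
  | one => exact hA
  -- `v ∘ ⇑(τ * ρ)` is definitionally `(v ∘ τ) ∘ ρ`
  | mul τ ρ _ _ hτ hρ => exact hτ _ (hρ A hA)

/-- Permuting the three index positions of a nonsingular 3-cube over a finite field
yields a nonsingular 3-cube. -/
theorem cubeNonsingular_perm {F : Type*} [Field F] [Fintype F] {d : ℕ} (hd : 1 ≤ d)
    (A : (Fin 3 → Fin d) → F) (hA : CubeNonsingular A) (σ : Equiv.Perm (Fin 3)) :
    CubeNonsingular (fun v => A (v ∘ σ)) :=
  cubeNonsingular_perm_general A hA σ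
end

section
/- There exists a finite semifield with exactly 64 elements whose multiplication is not associative, i.e., a proper semifield of order 64. -/
/-- A finite semifield: a finite nonassociative ring with identity in which
the product of any two nonzero elements is nonzero. -/
structure FiniteSemifield where
  D : Type
  [addGroup : AddCommGroup D]
  mul : D → D → D
  one : D
  finite : Finite D
  mul_add : ∀ a b c : D, mul a (b + c) = mul a b + mul a c
  add_mul : ∀ a b c : D, mul (a + b) c = mul a c + mul b c
  one_mul : ∀ a : D, mul one a = a
  mul_one : ∀ a : D, mul a one = a
  one_ne_zero : one ≠ (0 : D)
  noZeroDiv : ∀ a b : D, mul a b = 0 → a = 0 ∨ b = 0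

attribute [instance] FiniteSemifield.addGroup

/-! On `K × K`, for a field `K` with an endomorphism `σ`, the Hughes–Kleinfeld product
`(a, b) ∘ (c, d) = (a c + δ σ(b) d, b c + σ(a) d + γ σ(b) d)` is biadditive with identity `(1, 0)`,
and it has no zero divisors as soon as `X σ(X) + γ X - δ` has no root in `K`. Over a finite field
such a `γ` exists by counting, since a nonzero root `t` determines `γ = (δ - t σ(t)) / t`.
Associativity fails on `(a, 0), (0, 1), (0, 1)` whenever `σ² a ≠ a`; for `K = GF(8)` and `σ` the
Frobenius, `σ² a = a ^ 4`, and `X ^ 4 - X` has fewer than 8 roots. -/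

namespace HughesKleinfeld

section

variable {K : Type*} [Field K] (σ : K →+* K) (γ δ : K)

def mul (x y : K × K) : K × K :=
  (x.1 * y.1 + δ * σ x.2 * y.2, x.2 * y.1 + σ x.1 * y.2 + γ * σ x.2 * y.2)

theorem mul_add (x y z : K × K) : mul σ γ δ x (y + z) = mul σ γ δ x y + mul σ γ δ x z := by
  ext <;> simp only [mul, Prod.fst_add, Prod.snd_add] <;> ring

theorem add_mul (x y z : K × K) : mul σ γ δ (x + y) z = mul σ γ δ x z + mul σ γ δ y z := by
  ext <;> simp only [mul, Prod.fst_add, Prod.snd_add, map_add] <;> ring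

theorem one_mul (x : K × K) : mul σ γ δ (1, 0) x = x := by
  ext <;> simp [mul]

theorem mul_one (x : K × K) : mul σ γ δ x (1, 0) = x := by
  ext <;> simp [mul]

/-- The determinant of the `K`-linear map `y ↦ mul σ γ δ x y`. -/
def det (x : K × K) : K :=
  x.1 * σ x.1 + γ * x.1 * σ x.2 - δ * x.2 * σ x.2

theorem det_mul_snd (x y : K × K) :
    det σ γ δ x * y.2 = x.1 * (mul σ γ δ x y).2 - x.2 * (mul σ γ δ x y).1 := by
  simp only [det, mul]
  ring

variable {σ γ δ}

theorem det_ne_zero (hK : ∀ t : K, t * σ t + γ * t ≠ δ) {x : K × K} (hx : x ≠ 0) :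
    det σ γ δ x ≠ 0 := by
  obtain ⟨a, b⟩ := x
  by_cases hb : b = 0
  · have ha : a ≠ 0 := by rintro rfl; exact hx (by rw [hb]; rfl)
    simpa [det, hb] using ha
  · have hσb : σ b ≠ 0 := (map_ne_zero σ).2 hb
    have hdet : det σ γ δ (a, b) = b * σ b * ((a / b) * σ (a / b) + γ * (a / b) - δ) := by
      simp only [det, map_div₀]
      field_simp
    rw [hdet]
    exact mul_ne_zero (mul_ne_zero hb hσb) (sub_ne_zero.2 (hK _))

theorem eq_zero_of_mul_eq_zero (hK : ∀ t : K, t * σ t + γ * t ≠ δ) {x y : K × K}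
    (h : mul σ γ δ x y = 0) : x = 0 ∨ y = 0 := by
  refine or_iff_not_imp_left.2 fun hx ↦ ?_
  have hd : y.2 = 0 := by
    have := det_mul_snd σ γ δ x y
    rw [h, Prod.fst_zero, Prod.snd_zero, mul_zero, mul_zero, sub_zero] at this
    exact (mul_eq_zero.1 this).resolve_left (det_ne_zero hK hx)
  have h₁ : x.1 * y.1 = 0 := by simpa [mul, hd] using congrArg Prod.fst h
  have h₂ : x.2 * y.1 = 0 := by simpa [mul, hd] using congrArg Prod.snd h
  have hc : y.1 = 0 := by
    by_contra hc
    exact hx (Prod.ext ((mul_eq_zero.1 h₁).resolve_right hc) ((mul_eq_zero.1 h₂).resolve_right hc))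
  exact Prod.ext hc hd

theorem not_mul_assoc (hδ : δ ≠ 0) {a : K} (ha : σ (σ a) ≠ a) :
    mul σ γ δ (mul σ γ δ (a, 0) (0, 1)) (0, 1) ≠ mul σ γ δ (a, 0) (mul σ γ δ (0, 1) (0, 1)) := by
  intro h
  have h₁ : δ * σ (σ a) = δ * a := by simpa [mul, mul_comm a] using congrArg Prod.fst h
  exact ha (mul_left_cancel₀ hδ h₁)

end

def semifield {K : Type} [Field K] [Finite K] (σ : K →+* K) (γ δ : K)
    (hK : ∀ t : K, t * σ t + γ * t ≠ δ) : FiniteSemifield where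
  D := K × K
  mul := mul σ γ δ
  one := (1, 0)
  finite := inferInstance
  mul_add := HughesKleinfeld.mul_add σ γ δ
  add_mul := HughesKleinfeld.add_mul σ γ δ
  one_mul := HughesKleinfeld.one_mul σ γ δ
  mul_one := HughesKleinfeld.mul_one σ γ δ
  one_ne_zero := by simp
  noZeroDiv _ _ := eq_zero_of_mul_eq_zero hK

end HughesKleinfeld

theorem exists_forall_mul_add_mul_ne {K : Type*} [Field K] [Finite K] (σ : K → K) {δ : K}
    (hδ : δ ≠ 0) : ∃ γ : K, ∀ t, t * σ t + γ * t ≠ δ := by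
  classical
  have := Fintype.ofFinite K
  let solvable := (Finset.univ.erase 0).image fun t : K ↦ (δ - t * σ t) / t
  have hcard : solvable.card < (Finset.univ : Finset K).card :=
    calc solvable.card ≤ (Finset.univ.erase 0).card := Finset.card_image_le
      _ < Finset.univ.card := Finset.card_erase_lt_of_mem (Finset.mem_univ 0)
  obtain ⟨γ, -, hγ⟩ := Finset.exists_mem_notMem_of_card_lt_card hcard
  refine ⟨γ, fun t ht ↦ ?_⟩
  have ht0 : t ≠ 0 := by rintro rfl; simp [eq_comm, hδ] at ht
  refine hγ (Finset.mem_image.2 ⟨t, Finset.mem_erase.2 ⟨ht0, Finset.mem_univ t⟩, ?_⟩)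
  rw [← ht, div_eq_iff ht0]
  ring

theorem exists_pow_ne_self {K : Type*} [Field K] {n : ℕ} (hn : 1 < n) (hK : n < Cardinal.mk K) :
    ∃ a : K, a ^ n ≠ a := by
  obtain ⟨a, ha⟩ := Polynomial.exists_eval_ne_zero_of_natDegree_lt_card
    (Polynomial.X ^ n - Polynomial.X) (FiniteField.X_pow_card_sub_X_ne_zero K hn)
    (by rwa [FiniteField.X_pow_card_sub_X_natDegree_eq K hn])
  exact ⟨a, by simpa [sub_eq_zero] using ha⟩

/-- There exists a proper (non-associative) finite semifield of order 64. -/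
theorem exists_proper_semifield64 :
    ∃ S : FiniteSemifield, Nat.card S.D = 64 ∧
      ¬ ∀ a b c : S.D, S.mul (S.mul a b) c = S.mul a (S.mul b c) := by
  let K := GaloisField 2 3
  have hK : Nat.card K = 8 := GaloisField.card 2 3 (by norm_num)
  obtain ⟨γ, hγ⟩ := exists_forall_mul_add_mul_ne (frobenius K 2) one_ne_zero
  obtain ⟨a, ha⟩ : ∃ a : K, a ^ 4 ≠ a :=
    exists_pow_ne_self (by norm_num) (by rw [← Nat.cast_card, hK]; norm_num)
  have hσa : frobenius K 2 (frobenius K 2 a) ≠ a := by simpa [frobenius_def, ← pow_mul] using ha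
  refine ⟨HughesKleinfeld.semifield (frobenius K 2) γ 1 hγ, ?_,
    fun h ↦ HughesKleinfeld.not_mul_assoc one_ne_zero hσa (h (a, 0) (0, 1) (0, 1))⟩
  change Nat.card (K × K) = 64
  rw [Nat.card_prod, hK]
end

section
/- There exists a finite semifield with exactly 64 elements whose multiplication is commutative but not associative. -/
open Matrix

section StructureConstants

variable {ι R : Type*} [Fintype ι]

def leftMulMatrix [Semiring R] (c : ι → ι → ι → R) (a : ι → R) : Matrix ι ι R :=
  fun k j => ∑ i, a i * c i j k

def structMul [Semiring R] (c : ι → ι → ι → R) (a b : ι → R) : ι → R :=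
  leftMulMatrix c a *ᵥ b

theorem structMul_add [Semiring R] (c : ι → ι → ι → R) (a b b' : ι → R) :
    structMul c a (b + b') = structMul c a b + structMul c a b' :=
  mulVec_add _ _ _

theorem leftMulMatrix_add [Semiring R] (c : ι → ι → ι → R) (a a' : ι → R) :
    leftMulMatrix c (a + a') = leftMulMatrix c a + leftMulMatrix c a' := by
  ext k j
  simp only [leftMulMatrix, Matrix.add_apply, Pi.add_apply, add_mul, Finset.sum_add_distrib]

theorem add_structMul [Semiring R] (c : ι → ι → ι → R) (a a' b : ι → R) :
    structMul c (a + a') b = structMul c a b + structMul c a' b := by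
  rw [structMul, leftMulMatrix_add, add_mulVec]
  rfl

theorem structMul_comm [CommSemiring R] {c : ι → ι → ι → R} (hc : ∀ i j, c i j = c j i)
    (a b : ι → R) : structMul c a b = structMul c b a := by
  ext k
  simp only [structMul, leftMulMatrix, mulVec, dotProduct, Finset.sum_mul]
  rw [Finset.sum_comm]
  refine Finset.sum_congr rfl fun i _ => Finset.sum_congr rfl fun j _ => ?_
  rw [hc]
  ring

theorem leftMulMatrix_single [Semiring R] [DecidableEq ι] {c : ι → ι → ι → R} {i₀ : ι}
    (hc : ∀ j, c i₀ j = Pi.single j 1) : leftMulMatrix c (Pi.single i₀ 1) = 1 := by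
  ext k j
  simp [leftMulMatrix, Pi.single_apply, hc, Matrix.one_apply, eq_comm]

theorem single_structMul [Semiring R] [DecidableEq ι] {c : ι → ι → ι → R} {i₀ : ι}
    (hc : ∀ j, c i₀ j = Pi.single j 1) (b : ι → R) : structMul c (Pi.single i₀ 1) b = b := by
  rw [structMul, leftMulMatrix_single hc, one_mulVec]

end StructureConstants

def semifield64Table : Fin 6 → Fin 6 → Fin 6 → ZMod 2 :=
  ![![![1, 0, 0, 0, 0, 0], ![0, 1, 0, 0, 0, 0], ![0, 0, 1, 0, 0, 0],
      ![0, 0, 0, 1, 0, 0], ![0, 0, 0, 0, 1, 0], ![0, 0, 0, 0, 0, 1]],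
    ![![0, 1, 0, 0, 0, 0], ![0, 1, 1, 1, 1, 0], ![0, 0, 1, 1, 1, 1],
      ![0, 1, 0, 0, 1, 1], ![1, 1, 1, 0, 0, 0], ![1, 1, 0, 0, 0, 0]],
    ![![0, 0, 1, 0, 0, 0], ![0, 0, 1, 1, 1, 1], ![1, 1, 0, 1, 1, 0],
      ![0, 1, 1, 1, 0, 0], ![1, 1, 1, 1, 0, 1], ![0, 1, 0, 1, 0, 1]],
    ![![0, 0, 0, 1, 0, 0], ![0, 1, 0, 0, 1, 1], ![0, 1, 1, 1, 0, 0],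
      ![0, 0, 1, 1, 1, 0], ![1, 0, 0, 1, 0, 0], ![0, 1, 0, 0, 0, 1]],
    ![![0, 0, 0, 0, 1, 0], ![1, 1, 1, 0, 0, 0], ![1, 1, 1, 1, 0, 1],
      ![1, 0, 0, 1, 0, 0], ![0, 1, 0, 1, 0, 0], ![1, 0, 1, 1, 1, 1]],
    ![![0, 0, 0, 0, 0, 1], ![1, 1, 0, 0, 0, 0], ![0, 1, 0, 1, 0, 1],
      ![0, 1, 0, 0, 0, 1], ![1, 0, 1, 1, 1, 1], ![1, 1, 0, 0, 1, 1]]]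

theorem semifield64Table_symm : ∀ i j, semifield64Table i j = semifield64Table j i := by
  decide

theorem semifield64Table_zero : ∀ j, semifield64Table 0 j = Pi.single j 1 := by
  decide

theorem eq_zero_of_leftMulMatrix_semifield64Table_mulVec_eq_zero {a b : Fin 6 → ZMod 2}
    (ha : a ≠ 0) (h :  leftMulMatrix semifield64Table a *ᵥ b = 0) : b = 0 := by
  -- the kernel evaluates a quantifier over `Fin 64` far faster than one over `Fin 6 → ZMod 2`
  have nonsingular : ∀ x : Fin 64, (finFunctionFinEquiv (m := 2) (n := 6)).symm x ≠ 0 →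
      ∀ y : Fin 64, leftMulMatrix semifield64Table (finFunctionFinEquiv.symm x) *ᵥ
        finFunctionFinEquiv.symm y = 0 → (finFunctionFinEquiv (m := 2) (n := 6)).symm y = 0 := by
    decide +kernel
  obtain ⟨x, rfl⟩ := (finFunctionFinEquiv (m := 2) (n := 6)).symm.surjective a
  obtain ⟨y, rfl⟩ := (finFunctionFinEquiv (m := 2) (n := 6)).symm.surjective b
  exact nonsingular x ha y h

theorem semifield64_not_assoc :
    structMul semifield64Table (structMul semifield64Table (Pi.single 1 1) (Pi.single 1 1))
        (Pi.single 2 1) ≠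
      structMul semifield64Table (Pi.single 1 1)
        (structMul semifield64Table (Pi.single 1 1) (Pi.single 2 1)) := by
  decide

def semifield64 : FiniteSemifield where
  D := Fin 6 → ZMod 2
  mul := structMul semifield64Table
  one := Pi.single 0 1
  finite := inferInstance
  mul_add := structMul_add _
  add_mul := add_structMul _
  one_mul := single_structMul semifield64Table_zero
  mul_one a := by rw [structMul_comm semifield64Table_symm, single_structMul semifield64Table_zero]
  one_ne_zero := by decide
  noZeroDiv a b h :=
    or_iff_not_imp_left.2 fun ha => eq_zero_of_leftMulMatrix_semifield64Table_mulVec_eq_zero ha h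

/-- There exists a finite semifield of order 64 whose multiplication is
commutative but not associative. -/
theorem exists_commutative_proper_semifield64 :
    ∃ S : FiniteSemifield, Nat.card S.D = 64 ∧
      (∀ a b : S.D, S.mul a b = S.mul b a) ∧
      ¬ ∀ a b c : S.D, S.mul (S.mul a b) c = S.mul a (S.mul b c) :=
  ⟨semifield64, by simp [semifield64], fun a b => structMul_comm semifield64Table_symm a b,
    fun h => semifield64_not_assoc (h _ _ _)⟩
end

section
/- Every finite semifield that is isotopic to the finite field GF(64) is isomorphic, as a ring, to GF(64); in particular its multiplication is associative and commutative. -/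
/-!
Putting `b = 1` and `a = 1` in `H (a * b) = F a * G b` gives `H a = F a * G 1` and
`H b = F 1 * G b`, so in the commutative field `H (a * b) = H a * H b / H 1`. Hence
`a ↦ H a / H 1` is a multiplicative additive bijection onto the field, and associativity
and commutativity pull back along it.
-/

namespace FiniteSemifield

variable {K : Type*} [Field K] (S : FiniteSemifield)

theorem map_one_ne_zero (F : S.D ≃+ K) : F S.one ≠ 0 :=
  (map_ne_zero_iff F F.injective).2 S.one_ne_zero

theorem exists_mul_addEquiv_of_isotopy {F G H : S.D ≃+ K}
    (hFGH : ∀ a b : S.D, H (S.mul a b) = F a * G b) :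
    ∃ φ : S.D ≃+ K, ∀ a b : S.D, φ (S.mul a b) = φ a * φ b := by
  have hF₁ := S.map_one_ne_zero F
  have hG₁ := S.map_one_ne_zero G
  have hH_right (a : S.D) : H a = F a * G S.one := by rw [← hFGH, S.mul_one]
  have hH_left (b : S.D) : H b = F S.one * G b := by rw [← hFGH, S.one_mul]
  let φ := H.trans (LinearEquiv.smulOfNeZero K K _ (inv_ne_zero (S.map_one_ne_zero H))).toAddEquiv
  refine ⟨φ, fun a b => ?_⟩
  change (H S.one)⁻¹ * H (S.mul a b) = (H S.one)⁻¹ * H a * ((H S.one)⁻¹ * H b)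
  rw [hFGH, hH_right a, hH_left b, hH_right S.one]
  field_simp

variable {S}

theorem mul_assoc_of_mul_addEquiv (φ : S.D ≃+ K) (hφ : ∀ a b : S.D, φ (S.mul a b) = φ a * φ b)
    (a b c : S.D) : S.mul (S.mul a b) c = S.mul a (S.mul b c) :=
  φ.injective (by rw [hφ, hφ, hφ, hφ, mul_assoc])

theorem mul_comm_of_mul_addEquiv (φ : S.D ≃+ K) (hφ : ∀ a b : S.D, φ (S.mul a b) = φ a * φ b)
    (a b : S.D) : S.mul a b = S.mul b a :=
  φ.injective (by rw [hφ, hφ, mul_comm])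

end FiniteSemifield

/-- Every finite semifield isotopic to the finite field GF(64) is isomorphic,
as a ring, to GF(64); in particular its multiplication is associative and
commutative. -/
theorem isotope_of_GF64_is_GF64 (S : FiniteSemifield)
    (hiso : ∃ F G H : S.D ≃+ GaloisField 2 6,
      ∀ a b : S.D, H (S.mul a b) = F a * G b) :
    (∃ φ : S.D ≃+ GaloisField 2 6, ∀ a b : S.D, φ (S.mul a b) = φ a * φ b) ∧
    (∀ a b c : S.D, S.mul (S.mul a b) c = S.mul a (S.mul b c)) ∧
    (∀ a b : S.D, S.mul a b = S.mul b a) := by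
  obtain ⟨F, G, H, hFGH⟩ := hiso
  obtain ⟨φ, hφ⟩ := S.exists_mul_addEquiv_of_isotopy hFGH
  exact ⟨⟨φ, hφ⟩, FiniteSemifield.mul_assoc_of_mul_addEquiv φ hφ,
    FiniteSemifield.mul_comm_of_mul_addEquiv φ hφ⟩
end

section
/- Let D be a finite semifield and let 𝒟 be a complete set of pairwise non-isomorphic finite semifields such that every finite semifield isotopic to D is isomorphic to exactly one member of 𝒟. Then (|D| − 1)² = |At(D)| · Σ_{E ∈ 𝒟} 1/|Aut(E)|, as an identity of rational numbers, where At(D) is the autotopism group of D and Aut(E) is the automorphism group of E. -/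
/-- Isotopy of finite semifields: a triple of additive bijections `(F, G, H)`
with `H (a b) = F a · G b`. -/
def FiniteSemifield.Isotopic (S T : FiniteSemifield) : Prop :=
  ∃ F G H : S.D ≃+ T.D, ∀ a b : S.D, H (S.mul a b) = T.mul (F a) (G b)

/-- Isomorphism of finite semifields: an additive bijection preserving products. -/
def FiniteSemifield.Isomorphic (S T : FiniteSemifield) : Prop :=
  ∃ φ : S.D ≃+ T.D, ∀ a b : S.D, φ (S.mul a b) = T.mul (φ a) (φ b)

/-- The autotopism group of a finite semifield, as a type. -/
def FiniteSemifield.Autotopism (S : FiniteSemifield) : Type :=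
  {t : (S.D ≃+ S.D) × (S.D ≃+ S.D) × (S.D ≃+ S.D) //
    ∀ a b : S.D, t.2.2 (S.mul a b) = S.mul (t.1 a) (t.2.1 b)}

/-- The automorphism group of a finite semifield, as a type. -/
def FiniteSemifield.Aut (S : FiniteSemifield) : Type :=
  {φ : S.D ≃+ S.D // ∀ a b : S.D, φ (S.mul a b) = S.mul (φ a) (φ b)}

/-!
An isotopy `(F, G, H)` from `S` to `D` is determined by `H` and the pair `(y, z) = (F 1, G 1)` of
nonzero elements, since `H a = F a · z` and `H b = y · G b`; and then `H` is an isomorphism from `S`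
onto the principal isotope `D_{y,z}`, whose product is `a ∘ b = R_z⁻¹ a · L_y⁻¹ b`. For `E` isotopic
to `D` the isotopies `E → D` form an `At(D)`-torsor, so `|At(D)| = Σ_{y,z ≠ 0} |Iso(E, D_{y,z})|`.
Each `D_{y,z}` is isomorphic to exactly one `E_i`, so `Σ_i |Iso(E_i, D_{y,z})| / |Aut(E_i)| = 1`;
summing over the `(|D| - 1)²` pairs `(y, z)` and exchanging the sums gives the formula.
-/

namespace FiniteSemifield

attribute [local instance] FiniteSemifield.finite

variable {S T U : FiniteSemifield}

def Isomorphism (S T : FiniteSemifield) : Type :=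
  {φ : S.D ≃+ T.D // ∀ a b : S.D, φ (S.mul a b) = T.mul (φ a) (φ b)}

def Isotopy (S T : FiniteSemifield) : Type :=
  {t : (S.D ≃+ T.D) × (S.D ≃+ T.D) × (S.D ≃+ T.D) //
    ∀ a b : S.D, t.2.2 (S.mul a b) = T.mul (t.1 a) (t.2.1 b)}

instance : Finite (Isotopy S T) := Subtype.finite

instance : Finite S.Aut := Subtype.finite

instance : Nonempty S.Aut := ⟨⟨AddEquiv.refl S.D, fun _ _ => rfl⟩⟩

namespace Isomorphism

@[ext]
lemma ext {φ ψ : Isomorphism S T} (h : ∀ a, φ.1 a = ψ.1 a) : φ = ψ :=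
  Subtype.ext (AddEquiv.ext h)

def trans (φ : Isomorphism S T) (ψ : Isomorphism T U) : Isomorphism S U :=
  ⟨φ.1.trans ψ.1, fun a b => by simp only [AddEquiv.trans_apply, φ.2, ψ.2]⟩

def symm (φ : Isomorphism S T) : Isomorphism T S :=
  ⟨φ.1.symm, fun a b => φ.1.injective <| by simp only [φ.2, AddEquiv.apply_symm_apply]⟩

lemma map_one (φ : Isomorphism S T) : φ.1 S.one = T.one :=
  calc φ.1 S.one
      = T.mul (φ.1 S.one) (φ.1 (φ.1.symm T.one)) := by rw [φ.1.apply_symm_apply, T.mul_one]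
    _ = T.one := by rw [← φ.2, S.one_mul, φ.1.apply_symm_apply]

lemma card_eq_card_aut (φ : Isomorphism S T) : Nat.card (Isomorphism S T) = Nat.card S.Aut :=
  Nat.card_congr
    { toFun := fun ψ => ψ.trans φ.symm
      invFun := fun ψ => Isomorphism.trans ψ φ
      left_inv := fun ψ => ext fun a => φ.1.apply_symm_apply (ψ.1 a)
      right_inv := fun ψ => ext fun a => φ.1.symm_apply_apply (ψ.1 a) }

end Isomorphism

lemma isomorphic_iff_nonempty : S.Isomorphic T ↔ Nonempty (Isomorphism S T) :=
  ⟨fun ⟨φ, h⟩ => ⟨⟨φ, h⟩⟩, fun ⟨⟨φ, h⟩⟩ => ⟨φ, h⟩⟩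

lemma isotopic_iff_nonempty : S.Isotopic T ↔ Nonempty (Isotopy S T) :=
  ⟨fun ⟨F, G, H, h⟩ => ⟨⟨(F, G, H), h⟩⟩, fun ⟨⟨(F, G, H), h⟩⟩ => ⟨F, G, H, h⟩⟩

namespace Isotopy

@[ext]
lemma ext {t u : Isotopy S T} (h₁ : ∀ a, t.1.1 a = u.1.1 a) (h₂ : ∀ a, t.1.2.1 a = u.1.2.1 a)
    (h₃ : ∀ a, t.1.2.2 a = u.1.2.2 a) : t = u :=
  Subtype.ext (Prod.ext (AddEquiv.ext h₁) (Prod.ext (AddEquiv.ext h₂) (AddEquiv.ext h₃)))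

def trans (t : Isotopy S T) (u : Isotopy T U) : Isotopy S U :=
  ⟨(t.1.1.trans u.1.1, t.1.2.1.trans u.1.2.1, t.1.2.2.trans u.1.2.2), fun a b => by
    simp only [AddEquiv.trans_apply, t.2, u.2]⟩

def symm (t : Isotopy S T) : Isotopy T S :=
  ⟨(t.1.1.symm, t.1.2.1.symm, t.1.2.2.symm), fun a b => t.1.2.2.injective <| by
    simp only [t.2, AddEquiv.apply_symm_apply]⟩

lemma card_eq_card_autotopism (t : Isotopy S T) :
    Nat.card (Isotopy S T) = Nat.card T.Autotopism :=
  Nat.card_congr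
    { toFun := fun u => t.symm.trans u
      invFun := fun u => t.trans u
      left_inv := fun u => ext (fun a => congrArg u.1.1 (t.1.1.symm_apply_apply a))
        (fun a => congrArg u.1.2.1 (t.1.2.1.symm_apply_apply a))
        (fun a => congrArg u.1.2.2 (t.1.2.2.symm_apply_apply a))
      right_inv := fun u => ext (fun a => congrArg u.1.1 (t.1.1.apply_symm_apply a))
        (fun a => congrArg u.1.2.1 (t.1.2.1.apply_symm_apply a))
        (fun a => congrArg u.1.2.2 (t.1.2.2.apply_symm_apply a)) }

end Isotopy

variable (S)

noncomputable def mulLeft (y : {x : S.D // x ≠ 0}) : S.D ≃+ S.D :=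
  AddEquiv.ofBijective (AddMonoidHom.mk' (S.mul y) (S.mul_add y)) <|
    Finite.injective_iff_bijective.1 <| (injective_iff_map_eq_zero _).2 fun a h =>
      (S.noZeroDiv y a h).resolve_left y.2

noncomputable def mulRight (z : {x : S.D // x ≠ 0}) : S.D ≃+ S.D :=
  AddEquiv.ofBijective (AddMonoidHom.mk' (S.mul · z) (S.add_mul · · z)) <|
    Finite.injective_iff_bijective.1 <| (injective_iff_map_eq_zero _).2 fun a h =>
      (S.noZeroDiv a z h).resolve_right z.2

lemma mulLeft_symm_mul (y z : {x : S.D // x ≠ 0}) : (S.mulLeft y).symm (S.mul y z) = z :=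
  (S.mulLeft y).symm_apply_apply z

lemma mulRight_symm_mul (z y : {x : S.D // x ≠ 0}) : (S.mulRight z).symm (S.mul y z) = y :=
  (S.mulRight z).symm_apply_apply y

noncomputable def principalIsotope (y z : {x : S.D // x ≠ 0}) : FiniteSemifield where
  D := S.D
  mul a b := S.mul ((S.mulRight z).symm a) ((S.mulLeft y).symm b)
  one := S.mul y z
  finite := S.finite
  mul_add a b c := by rw [map_add, S.mul_add]
  add_mul a b c := by rw [map_add, S.add_mul]
  one_mul a := by
    rw [mulRight_symm_mul]
    exact (S.mulLeft y).apply_symm_apply a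
  mul_one a := by
    rw [mulLeft_symm_mul]
    exact (S.mulRight z).apply_symm_apply a
  one_ne_zero h := (S.noZeroDiv y z h).elim y.2 z.2
  noZeroDiv a b h := (S.noZeroDiv _ _ h).imp
    (S.mulRight z).symm.map_eq_zero_iff.1 (S.mulLeft y).symm.map_eq_zero_iff.1

lemma principalIsotope_isotopic (y z : {x : S.D // x ≠ 0}) :
    (S.principalIsotope y z).Isotopic S :=
  ⟨(S.mulRight z).symm, (S.mulLeft y).symm, AddEquiv.refl S.D, fun _ _ => rfl⟩

variable {S}

namespace Isotopy

lemma map_eq_mul_snd_one (t : Isotopy S T) (a : S.D) :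
    t.1.2.2 a = T.mul (t.1.1 a) (t.1.2.1 S.one) := by
  simpa only [S.mul_one] using t.2 a S.one

lemma map_eq_fst_one_mul (t : Isotopy S T) (b : S.D) :
    t.1.2.2 b = T.mul (t.1.1 S.one) (t.1.2.1 b) := by
  simpa only [S.one_mul] using t.2 S.one b

def basePoint (t : Isotopy S T) : {x : T.D // x ≠ 0} × {x : T.D // x ≠ 0} :=
  (⟨t.1.1 S.one, t.1.1.map_ne_zero_iff.2 S.one_ne_zero⟩,
    ⟨t.1.2.1 S.one, t.1.2.1.map_ne_zero_iff.2 S.one_ne_zero⟩)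

lemma mulRight_symm_map (t : Isotopy S T) {p} (hp : t.basePoint = p) (a : S.D) :
    (T.mulRight p.2).symm (t.1.2.2 a) = t.1.1 a := by
  subst hp
  exact (AddEquiv.symm_apply_eq _).2 (t.map_eq_mul_snd_one a)

lemma mulLeft_symm_map (t : Isotopy S T) {p} (hp : t.basePoint = p) (b : S.D) :
    (T.mulLeft p.1).symm (t.1.2.2 b) = t.1.2.1 b := by
  subst hp
  exact (AddEquiv.symm_apply_eq _).2 (t.map_eq_fst_one_mul b)

noncomputable def fiberEquiv (p : {x : T.D // x ≠ 0} × {x : T.D // x ≠ 0}) :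
    {t : Isotopy S T // t.basePoint = p} ≃ Isomorphism S (T.principalIsotope p.1 p.2) where
  toFun t := ⟨t.1.1.2.2, fun a b => (t.1.2 a b).trans <|
    congrArg₂ T.mul (t.1.mulRight_symm_map t.2 a).symm (t.1.mulLeft_symm_map t.2 b).symm⟩
  invFun φ := ⟨⟨(φ.1.trans (T.mulRight p.2).symm, φ.1.trans (T.mulLeft p.1).symm, φ.1), φ.2⟩, by
    refine Prod.ext (Subtype.ext ?_) (Subtype.ext ?_)
    · exact (congrArg (T.mulRight p.2).symm φ.map_one).trans (T.mulRight_symm_mul p.2 p.1)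
    · exact (congrArg (T.mulLeft p.1).symm φ.map_one).trans (T.mulLeft_symm_mul p.1 p.2)⟩
  left_inv := by
    rintro ⟨t, ht⟩
    exact Subtype.ext (ext (t.mulRight_symm_map ht) (t.mulLeft_symm_map ht) fun _ => rfl)
  right_inv _ := rfl

theorem card_eq_sum_card_isomorphism [Fintype T.D] [DecidableEq T.D] :
    Nat.card (Isotopy S T) = ∑ p : {x : T.D // x ≠ 0} × {x : T.D // x ≠ 0},
      Nat.card (Isomorphism S (T.principalIsotope p.1 p.2)) := by
  rw [← Nat.card_congr (Equiv.sigmaFiberEquiv basePoint), Nat.card_sigma]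
  exact Finset.sum_congr rfl fun p _ => Nat.card_congr (fiberEquiv p)

end Isotopy

theorem Isotopic.card_autotopism_eq_sum [Fintype T.D] [DecidableEq T.D] (h : S.Isotopic T) :
    Nat.card T.Autotopism = ∑ p : {x : T.D // x ≠ 0} × {x : T.D // x ≠ 0},
      Nat.card (Isomorphism S (T.principalIsotope p.1 p.2)) := by
  obtain ⟨t⟩ := isotopic_iff_nonempty.1 h
  rw [← t.card_eq_card_autotopism, Isotopy.card_eq_sum_card_isomorphism]

theorem sum_card_isomorphism_div_card_aut {ι : Type} [Fintype ι] (E : ι → FiniteSemifield)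
    (hpairwise : ∀ i j, i ≠ j → ¬ (E i).Isomorphic (E j)) (hS : ∃ i, S.Isomorphic (E i)) :
    ∑ i, (Nat.card (Isomorphism (E i) S) : ℚ) / Nat.card (E i).Aut = 1 := by
  obtain ⟨j, hj⟩ := hS
  obtain ⟨φ⟩ := isomorphic_iff_nonempty.1 hj
  rw [Finset.sum_eq_single_of_mem j (Finset.mem_univ j), φ.symm.card_eq_card_aut]
  · exact div_self (Nat.cast_ne_zero.2 Nat.card_pos.ne')
  · intro i _ hij
    have : IsEmpty (Isomorphism (E i) S) :=
      ⟨fun ψ => hpairwise i j hij (isomorphic_iff_nonempty.2 ⟨ψ.trans φ⟩)⟩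
    rw [Nat.card_of_isEmpty, Nat.cast_zero, zero_div]

end FiniteSemifield

lemma card_prod_subtype_ne {α : Type*} [Fintype α] [DecidableEq α] (a : α) :
    (Fintype.card ({x // x ≠ a} × {x // x ≠ a}) : ℚ) = ((Nat.card α : ℚ) - 1) ^ 2 := by
  have h := Fintype.card_congr (Equiv.optionSubtypeNe a)
  rw [Fintype.card_option] at h
  rw [Fintype.card_prod, Nat.card_eq_fintype_card, ← h]
  push_cast
  ring

/-- If `𝒟 = (E i)` is a complete family of pairwise non-isomorphic finite semifields
such that every finite semifield isotopic to `D` is isomorphic to exactly one member,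
then `(|D| − 1)² = |At(D)| · Σ_E 1/|Aut(E)|`. -/
theorem semifield_isotopy_class_counting (D : FiniteSemifield)
    {ι : Type} [Fintype ι] (E : ι → FiniteSemifield)
    (hisot : ∀ i, (E i).Isotopic D)
    (hpairwise : ∀ i j, i ≠ j → ¬ (E i).Isomorphic (E j))
    (hcomplete : ∀ S : FiniteSemifield, S.Isotopic D → ∃ i, S.Isomorphic (E i)) :
    ((Nat.card D.D : ℚ) - 1) ^ 2 =
      (Nat.card D.Autotopism : ℚ) * ∑ i, 1 / (Nat.card (E i).Aut : ℚ) := by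
  classical
  have := D.finite
  have := Fintype.ofFinite D.D
  calc ((Nat.card D.D : ℚ) - 1) ^ 2
      = ∑ p : {x : D.D // x ≠ 0} × {x : D.D // x ≠ 0}, ∑ i,
          (Nat.card (FiniteSemifield.Isomorphism (E i) (D.principalIsotope p.1 p.2)) : ℚ) /
            Nat.card (E i).Aut := by
        simp only [FiniteSemifield.sum_card_isomorphism_div_card_aut E hpairwise
          (hcomplete _ (D.principalIsotope_isotopic _ _)), Finset.sum_const, Finset.card_univ,
          nsmul_one, card_prod_subtype_ne]
    _ = ∑ i, (Nat.card D.Autotopism : ℚ) / Nat.card (E i).Aut := by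
        rw [Finset.sum_comm]
        refine Finset.sum_congr rfl fun i _ => ?_
        rw [← Finset.sum_div, (hisot i).card_autotopism_eq_sum, Nat.cast_sum]
    _ = (Nat.card D.Autotopism : ℚ) * ∑ i, 1 / (Nat.card (E i).Aut : ℚ) := by
        simp only [Finset.mul_sum, mul_one_div]
end

section
/- Every finite presemifield is isotopic to a finite semifield: if D is a finite nonassociative ring (not necessarily with identity) with more than one element in which the product of any two nonzero elements is nonzero, then there exists a multiplication ∘ on the additive group of D making it a finite semifield (with a two-sided identity), together with bijective additive maps F, G, H of D satisfying H(a·b) = F(a) ∘ G(b) for all a, b ∈ D. -/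
/-- A finite presemifield: a finite nonassociative ring (no identity assumed) with
more than one element in which the product of two nonzero elements is nonzero. -/
structure FinitePresemifield where
  D : Type
  [addGroup : AddCommGroup D]
  mul : D → D → D
  finite : Finite D
  nontrivial : Nontrivial D
  mul_add : ∀ a b c : D, mul a (b + c) = mul a b + mul a c
  add_mul : ∀ a b c : D, mul (a + b) c = mul a c + mul b c
  noZeroDiv : ∀ a b : D, mul a b = 0 → a = 0 ∨ b = 0

attribute [instance] FinitePresemifield.addGroup

/-!
Kaplansky's trick. Fix `u ≠ 0`. Right and left multiplication by `u` are injective (no zero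
divisors), hence bijective on a finite group, and `x ∘ y := R_u⁻¹(x) · L_u⁻¹(y)` is again
biadditive without zero divisors. Since `R_u⁻¹(u·u) = u = L_u⁻¹(u·u)`, the element `u·u` is a
two-sided identity for `∘`, and `a·b = R_u(a) ∘ L_u(b)` exhibits the isotopy.
-/

open Function

namespace AddMonoidHom

section Isotope

variable {M N M' N' P : Type*} [AddCommMonoid M] [AddCommMonoid N] [AddCommMonoid M']
  [AddCommMonoid N'] [AddCommMonoid P]

def isotope (m : M →+ N →+ P) (R : M ≃+ M') (L : N ≃+ N') : M' →+ N' →+ P :=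
  (m.compl₂ L.symm.toAddMonoidHom).comp R.symm.toAddMonoidHom

@[simp]
theorem isotope_apply (m : M →+ N →+ P) (R : M ≃+ M') (L : N ≃+ N') (x : M') (y : N') :
    m.isotope R L x y = m (R.symm x) (L.symm y) :=
  rfl

theorem isotope_apply_apply (m : M →+ N →+ P) (R : M ≃+ M') (L : N ≃+ N') (a : M) (b : N) :
    m.isotope R L (R a) (L b) = m a b := by
  simp

theorem isotope_eq_zero {m : M →+ N →+ P} (hm : ∀ a b, m a b = 0 → a = 0 ∨ b = 0)
    (R : M ≃+ M') (L : N ≃+ N') {x : M'} {y : N'} (h : m.isotope R L x y = 0) :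
    x = 0 ∨ y = 0 := by
  simpa using hm _ _ h

end Isotope

section Identity

variable {M : Type*} [AddCommMonoid M] {m : M →+ M →+ M} {u : M} {R L : M ≃+ M}

theorem isotope_self_mul (hR : ∀ x, R x = m x u) (hL : ∀ x, L x = m u x) (y : M) :
    m.isotope R L (m u u) y = y := by
  rw [← hR, ← L.apply_symm_apply y, isotope_apply_apply, hL]

theorem isotope_mul_self (hR : ∀ x, R x = m x u) (hL : ∀ x, L x = m u x) (x : M) :
    m.isotope R L x (m u u) = x := by
  rw [← hL, ← R.apply_symm_apply x, isotope_apply_apply, hR]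

end Identity

theorem injective_of_eq_zero_or_eq_zero {M N P : Type*} [AddCommGroup M] [AddCommGroup N]
    [AddCommGroup P] {m : M →+ N →+ P} (hm : ∀ a b, m a b = 0 → a = 0 ∨ b = 0) {u : M}
    (hu : u ≠ 0) : Injective (m u) :=
  (injective_iff_map_eq_zero _).mpr fun _ h => (hm _ _ h).resolve_left hu

end AddMonoidHom

namespace FinitePresemifield

variable (P : FinitePresemifield)

def mulHom : P.D →+ P.D →+ P.D :=
  AddMonoidHom.mk' (fun a => AddMonoidHom.mk' (P.mul a) (P.mul_add a))
    fun a b => AddMonoidHom.ext (P.add_mul a b)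

theorem mulHom_eq_zero {a b : P.D} (h : P.mulHom a b = 0) : a = 0 ∨ b = 0 :=
  P.noZeroDiv a b h

theorem mulHom_flip_eq_zero {a b : P.D} (h : P.mulHom.flip a b = 0) : a = 0 ∨ b = 0 :=
  (P.noZeroDiv b a h).symm

noncomputable def mulLeft {u : P.D} (hu : u ≠ 0) : P.D ≃+ P.D :=
  have := P.finite
  AddEquiv.ofBijective (P.mulHom u) <| Finite.injective_iff_bijective.mp <|
    AddMonoidHom.injective_of_eq_zero_or_eq_zero (fun _ _ => P.mulHom_eq_zero) hu

noncomputable def mulRight {u : P.D} (hu : u ≠ 0) : P.D ≃+ P.D :=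
  have := P.finite
  AddEquiv.ofBijective (P.mulHom.flip u) <| Finite.injective_iff_bijective.mp <|
    AddMonoidHom.injective_of_eq_zero_or_eq_zero (fun _ _ => P.mulHom_flip_eq_zero) hu

theorem mulLeft_apply {u : P.D} (hu : u ≠ 0) (x : P.D) : P.mulLeft hu x = P.mulHom u x :=
  rfl

theorem mulRight_apply {u : P.D} (hu : u ≠ 0) (x : P.D) : P.mulRight hu x = P.mulHom x u :=
  rfl

end FinitePresemifield

/-- Every finite presemifield is isotopic to a finite semifield: there is a new
multiplication `mul'` on the same additive group with a two-sided identity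
(making it a finite semifield) and additive bijections `F, G, H` with
`H (a · b) = F a ∘ G b`. -/
theorem presemifield_isotopic_to_semifield (P : FinitePresemifield) :
    ∃ (mul' : P.D → P.D → P.D) (e : P.D),
      (∀ a b c : P.D, mul' a (b + c) = mul' a b + mul' a c) ∧
      (∀ a b c : P.D, mul' (a + b) c = mul' a c + mul' b c) ∧
      e ≠ 0 ∧
      (∀ a : P.D, mul' e a = a) ∧
      (∀ a : P.D, mul' a e = a) ∧
      (∀ a b : P.D, mul' a b = 0 → a = 0 ∨ b = 0) ∧
      ∃ F G H : P.D ≃+ P.D, ∀ a b : P.D, H (P.mul a b) = mul' (F a) (G b) := by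
  have := P.nontrivial
  obtain ⟨u, hu⟩ := exists_ne (0 : P.D)
  let R := P.mulRight hu
  let L := P.mulLeft hu
  have hR := P.mulRight_apply hu
  have hL := P.mulLeft_apply hu
  refine ⟨fun x y => P.mulHom.isotope R L x y, P.mul u u, fun a b c => map_add _ b c,
    fun a b c => by simp only [map_add, AddMonoidHom.add_apply],
    fun h => (P.noZeroDiv u u h).elim hu hu,
    AddMonoidHom.isotope_self_mul hR hL, AddMonoidHom.isotope_mul_self hR hL,
    fun a b => AddMonoidHom.isotope_eq_zero (fun _ _ => P.mulHom_eq_zero) R L,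
    R, L, AddEquiv.refl _, fun a b => (P.mulHom.isotope_apply_apply R L a b).symm⟩
end

section
/- There exists a finite semifield D with exactly 64 elements whose automorphism group is trivial: the only bijective map D → D that is both additive and multiplicative is the identity. -/
/-!
Take `𝔽₈ × 𝔽₈` with the Knuth-type product
`(a, b) ∘ (c, d) = (a c + b d², a d + b c² + t b d²)`, where `𝔽₈ = 𝔽₂[t]/(t³ + t + 1)`.
The six right powers `x, x ∘ x, x ∘ (x ∘ x), …` of `x = (0, 1)` form an `𝔽₂`-basis, so an
automorphism `φ` is the `𝔽₂`-linear map sending each right power of `x` to the corresponding right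
power of `y = φ x`. Among the 63 nonzero `y`, only `y = x` makes this linear map respect the single
product `p ∘ p` with `p = (0, t)`.
-/

/-- `rightPow mul x n = x ∘ (x ∘ (⋯ ∘ x))` with `n + 1` factors. -/
def rightPow {M : Type*} (mul : M → M → M) (x : M) : ℕ → M
  | 0 => x
  | n + 1 => mul x (rightPow mul x n)

theorem map_rightPow {M N : Type*} {mulM : M → M → M} {mulN : N → N → N} {φ : M → N}
    (hφ : ∀ a b, φ (mulM a b) = mulN (φ a) (φ b)) (x : M) (n : ℕ) :
    φ (rightPow mulM x n) = rightPow mulN (φ x) n := by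
  induction n with
  | zero => rfl
  | succ n ih => simp only [rightPow, hφ, ih]

theorem map_eq_sum_rightPow {M N : Type*} [AddCommMonoid M] [AddCommMonoid N]
    {mulM : M → M → M} {mulN : N → N → N} {n : ℕ} (c : Fin n → ℕ) (x : M)
    (φ : M →+ N) (hφ : ∀ a b, φ (mulM a b) = mulN (φ a) (φ b)) :
    φ (∑ i, c i • rightPow mulM x i) = ∑ i, c i • rightPow mulN (φ x) i := by
  simp only [map_sum, map_nsmul, map_rightPow hφ]

namespace Semifield64

/-- `𝔽₈ = 𝔽₂[t]/(t³ + t + 1)` in the basis `1, t, t²`. -/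
abbrev F : Type := ZMod 2 × ZMod 2 × ZMod 2

def fmul (a b : F) : F :=
  (a.1 * b.1 + a.2.1 * b.2.2 + a.2.2 * b.2.1,
   a.1 * b.2.1 + a.2.1 * b.1 + a.2.1 * b.2.2 + a.2.2 * b.2.1 + a.2.2 * b.2.2,
   a.1 * b.2.2 + a.2.1 * b.2.1 + a.2.2 * b.1 + a.2.2 * b.2.2)

def fsq (a : F) : F := fmul a a

def t : F := (0, 1, 0)

theorem fmul_add : ∀ a b c : F, fmul a (b + c) = fmul a b + fmul a c := by decide

theorem add_fmul : ∀ a b c : F, fmul (a + b) c = fmul a c + fmul b c := by decide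

theorem fsq_add : ∀ a b : F, fsq (a + b) = fsq a + fsq b := by decide

abbrev D : Type := F × F

def mul (p q : D) : D :=
  (fmul p.1 q.1 + fmul p.2 (fsq q.2),
   fmul p.1 q.2 + fmul p.2 (fsq q.1) + fmul t (fmul p.2 (fsq q.2)))

def one : D := ((1, 0, 0), 0)

set_option synthInstance.maxSize 2000 in
set_option maxRecDepth 4000 in
theorem eq_zero_or_eq_zero_of_mul_eq_zero : ∀ a b : D, mul a b = 0 → a = 0 ∨ b = 0 := by
  decide

def semifield : FiniteSemifield where
  D := D
  mul := mul
  one := one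
  finite := inferInstance
  mul_add a b c := by
    simp only [mul, Prod.fst_add, Prod.snd_add, fsq_add, fmul_add, Prod.mk_add_mk, Prod.mk.injEq]
    constructor <;> abel
  add_mul a b c := by
    simp only [mul, Prod.fst_add, Prod.snd_add, add_fmul, fmul_add, Prod.mk_add_mk, Prod.mk.injEq]
    constructor <;> abel
  one_mul := by decide
  mul_one := by decide
  one_ne_zero := by decide
  noZeroDiv := eq_zero_or_eq_zero_of_mul_eq_zero

def x : D := (0, (1, 0, 0))

/-- Coordinates in the basis `rightPow mul x 0, …, rightPow mul x 5`: the rows of the inverse of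
the matrix with these six vectors as columns. -/
def coord (a : D) : Fin 6 → ZMod 2 :=
  ![a.1.2.1 + a.2.1 + a.2.2.2, a.1.2.2 + a.2.2.1 + a.2.2.2, a.1.1 + a.2.2.1, a.2.2.2, a.1.2.1,
    a.1.1 + a.1.2.1 + a.1.2.2 + a.2.2.1 + a.2.2.2]

def basisMap (y a : D) : D := ∑ i, (coord a i).val • rightPow mul y i

theorem basisMap_x : ∀ a : D, basisMap x a = a := by decide

theorem map_eq_basisMap {G : Type*} [FunLike G D D] [AddMonoidHomClass G D D] (φ : G)
    (hφ : ∀ a b, φ (mul a b) = mul (φ a) (φ b)) (a : D) :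
    φ a = basisMap (φ x) a := by
  conv_lhs => rw [← basisMap_x a]
  exact map_eq_sum_rightPow _ x (φ : D →+ D) hφ

def p : D := (0, t)

theorem eq_x_of_basisMap_mul_self :
    ∀ y : D, y ≠ 0 → basisMap y (mul p p) = mul (basisMap y p) (basisMap y p) → y = x := by
  decide

theorem addEquiv_eq_refl_of_map_mul (φ : D ≃+ D) (hφ : ∀ a b, φ (mul a b) = mul (φ a) (φ b)) :
    φ = AddEquiv.refl D := by
  have hφx : φ x = x := by
    refine eq_x_of_basisMap_mul_self _ (φ.map_ne_zero_iff.mpr (by decide)) ?_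
    simp only [← map_eq_basisMap φ hφ]
    exact hφ p p
  refine AddEquiv.ext fun a => ?_
  rw [AddEquiv.refl_apply, map_eq_basisMap φ hφ, hφx, basisMap_x]

end Semifield64

/-- There exists a finite semifield of order 64 whose automorphism group is trivial. -/
theorem exists_semifield64_trivial_automorphism_group :
    ∃ S : FiniteSemifield, Nat.card S.D = 64 ∧
      ∀ φ : S.D ≃+ S.D,
        (∀ a b : S.D, φ (S.mul a b) = S.mul (φ a) (φ b)) →
        φ = AddEquiv.refl S.D :=
  ⟨Semifield64.semifield, by simp [Semifield64.semifield],
    Semifield64.addEquiv_eq_refl_of_map_mul⟩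
end
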